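/- Let X and Y be Hausdorff topological spaces, A ⊆ X, and let f : Y → X be a continuous map whose range is exactly A. Form the quotient space W̄ of the disjoint union X ⊕ (Y × [0,1]) by the equivalence relation generated by identifying (y, 0) with f(y), with quotient map p. Then the map X → W̄ given by x ↦ p(inl x) is a topological embedding, i.e., a homeomorphism of X onto its image p(X) with the subspace topology. -/

import Mathlib

/-- The gluing relation on `X ⊕ (Y × [0,1])` identifying `(y, 0)` with `f y`. -/
def glueRel {X Y : Type*} (f : Y → X) :
    X ⊕ (Y × unitInterval) → X ⊕ (Y × unitInterval) → Prop :=
  fun w w' => ∃ y : Y, w = Sum.inr (y, 0) ∧ w' = Sum.inl (f y)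

/-! Collapsing each segment `{y} × [0,1]` onto `f y` descends to a continuous retraction of the
adjunction space onto `p(X)`, and a map with a continuous left inverse is an embedding. -/

open Topology

theorem isEmbedding_quotMk_inl_of_retraction {X Z : Type*} [TopologicalSpace X]
    [TopologicalSpace Z] {r : X ⊕ Z → X ⊕ Z → Prop} {g : Z → X} (hg : Continuous g)
    (hr : ∀ a b, r a b → Sum.elim id g a = Sum.elim id g b) :
    IsEmbedding (fun x : X => Quot.mk r (Sum.inl x)) :=
  Function.LeftInverse.isEmbedding (f := Quot.lift _ hr) (fun _ => rfl)
    (continuous_quot_lift _ (continuous_id.sumElim hg)) (continuous_quot_mk.comp continuous_inl)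

theorem glueRel_sumElim_eq {X Y : Type*} (f : Y → X) :
    ∀ a b, glueRel f a b →
      Sum.elim id (f ∘ Prod.fst : Y × unitInterval → X) a = Sum.elim id (f ∘ Prod.fst) b := by
  rintro _ _ ⟨y, rfl, rfl⟩
  rfl

theorem embedding_into_adjunction_space_general
    {X Y : Type*} [TopologicalSpace X] [TopologicalSpace Y]
    (f : Y → X) (hf : Continuous f) :
    Topology.IsEmbedding (fun x : X => Quot.mk (glueRel f) (Sum.inl x)) :=
  isEmbedding_quotMk_inl_of_retraction (hf.comp continuous_fst) (glueRel_sumElim_eq f)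

/-- The natural map `X → W̄`, `x ↦ p (inl x)`, into the adjunction
space `W̄ = (X ⊕ (Y × [0,1])) / (glueRel f)` is a topological embedding. -/
theorem embedding_into_adjunction_space
    {X Y : Type*} [TopologicalSpace X] [TopologicalSpace Y]
    [T2Space X] [T2Space Y]
    (A : Set X) (f : Y → X) (hf : Continuous f) (hrange : Set.range f = A) :
    Topology.IsEmbedding (fun x : X => Quot.mk (glueRel f) (Sum.inl x)) :=
  embedding_into_adjunction_space_general f hf
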